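/- If ν ≤ 1 and x > 0, then the incomplete gamma function satisfies (1 + x)^{ν−1} e^{−x} ≤ Γ(ν, x) ≤ x^{ν−1} e^{−x}. -/

import Mathlib

/-!
With `p = ν - 1 ≤ 0`, the upper bound follows from `t ^ p ≤ x ^ p` for `t ≥ x`. For the lower
bound, `G t = (1 + t) ^ p * exp (-t)` tends to `0`, so `G x = ∫ t in Ioi x, -G' t`, and
`-G' t = ((1 + t) ^ p - p * (1 + t) ^ (p - 1)) * exp (-t) ≤ t ^ p * exp (-t)`: the tangent of the
convex function `s ↦ s ^ p` at `1 + t` lies below its graph at `t`.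
-/

noncomputable def incGamma (ν x : ℝ) : ℝ := ∫ t in Set.Ioi x, t ^ (ν - 1) * Real.exp (-t)

open Real Set MeasureTheory Filter Topology

lemma le_setIntegral_Ioi_of_hasDerivAt_of_neg_deriv_le {f G G' : ℝ → ℝ} {a : ℝ}
    (hG : ∀ t ∈ Ici a, HasDerivAt G (G' t) t) (hG' : ∀ t ∈ Ioi a, G' t ≤ 0)
    (hlim : Tendsto G atTop (𝓝 0)) (hle : ∀ t ∈ Ioi a, -G' t ≤ f t)
    (hf : IntegrableOn f (Ioi a)) : G a ≤ ∫ t in Ioi a, f t :=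
  calc G a = ∫ t in Ioi a, -G' t := by
        rw [integral_neg, integral_Ioi_of_hasDerivAt_of_nonpos' hG hG' hlim, zero_sub, neg_neg]
    _ ≤ ∫ t in Ioi a, f t :=
        setIntegral_mono_on (integrableOn_Ioi_deriv_of_nonpos' hG hG' hlim).neg hf
          measurableSet_Ioi hle

lemma one_add_rpow_sub_mul_le_rpow {p t : ℝ} (hp : p ≤ 0) (ht : 0 < t) :
    (1 + t) ^ p - p * (1 + t) ^ (p - 1) ≤ t ^ p := by
  have h1t : 0 < 1 + t := by linarith
  have bernoulli : 1 + (1 - p) * t⁻¹ ≤ (1 + t⁻¹) ^ (1 - p) :=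
    one_add_mul_self_le_rpow_one_add (by linarith [inv_pos.2 ht]) (by linarith)
  have hsplit : (1 + t⁻¹) ^ (1 - p) = (1 + t) ^ (1 - p) * t ^ (p - 1) := by
    rw [show 1 + t⁻¹ = (1 + t) * t⁻¹ by field_simp; ring, mul_rpow h1t.le (inv_nonneg.2 ht.le),
      inv_rpow ht.le, ← rpow_neg ht.le, neg_sub]
  have hcancel : (1 + t) ^ (p - 1) * (1 + t) ^ (1 - p) = 1 := by
    rw [← rpow_add h1t]; simp
  calc (1 + t) ^ p - p * (1 + t) ^ (p - 1) = (1 + t) ^ (p - 1) * (t * (1 + (1 - p) * t⁻¹)) := by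
        rw [rpow_sub_one h1t.ne']; field_simp; ring
    _ ≤ (1 + t) ^ (p - 1) * (t * (1 + t⁻¹) ^ (1 - p)) := by gcongr
    _ = (1 + t) ^ (p - 1) * (1 + t) ^ (1 - p) * (t * t ^ (p - 1)) := by rw [hsplit]; ring
    _ = t ^ p := by rw [hcancel, one_mul, rpow_sub_one ht.ne']; field_simp

lemma hasDerivAt_one_add_rpow_mul_exp_neg (p : ℝ) {t : ℝ} (ht : 0 < 1 + t) :
    HasDerivAt (fun t => (1 + t) ^ p * exp (-t))
      ((p * (1 + t) ^ (p - 1) - (1 + t) ^ p) * exp (-t)) t := by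
  have h := (((hasDerivAt_id t).const_add 1).rpow_const (p := p) (Or.inl ht.ne')).mul
    (hasDerivAt_neg t).exp
  exact h.congr_deriv (by simp only [id]; ring)

lemma tendsto_one_add_rpow_mul_exp_neg_atTop {p : ℝ} (hp : p ≤ 0) :
    Tendsto (fun t => (1 + t) ^ p * exp (-t)) atTop (𝓝 0) := by
  refine squeeze_zero' ?_ ?_ tendsto_exp_neg_atTop_nhds_zero
  · filter_upwards [eventually_ge_atTop 0] with t ht
    positivity
  · filter_upwards [eventually_ge_atTop 0] with t ht
    exact mul_le_of_le_one_left (exp_pos _).le (rpow_le_one_of_one_le_of_nonpos (by linarith) hp)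

lemma rpow_mul_exp_neg_le_of_le {p x t : ℝ} (hp : p ≤ 0) (hx : 0 < x) (ht : x ≤ t) :
    t ^ p * exp (-t) ≤ x ^ p * exp (-t) := by
  gcongr ?_ * _
  exact rpow_le_rpow_of_nonpos hx ht hp

lemma integrableOn_Ioi_rpow_mul_exp_neg {p x : ℝ} (hp : p ≤ 0) (hx : 0 < x) :
    IntegrableOn (fun t => t ^ p * exp (-t)) (Ioi x) := by
  refine ((integrableOn_exp_neg_Ioi x).const_mul (x ^ p)).mono'
    (by fun_prop : Measurable fun t : ℝ => t ^ p * exp (-t)).aestronglyMeasurable ?_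
  filter_upwards [ae_restrict_mem measurableSet_Ioi] with t ht
  have ht0 : 0 < t := hx.trans ht
  rw [norm_of_nonneg (by positivity)]
  exact rpow_mul_exp_neg_le_of_le hp hx ht.le

lemma incGamma_le_rpow_mul_exp_neg {ν x : ℝ} (hν : ν ≤ 1) (hx : 0 < x) :
    incGamma ν x ≤ x ^ (ν - 1) * exp (-x) := by
  have hp : ν - 1 ≤ 0 := by linarith
  calc incGamma ν x ≤ ∫ t in Ioi x, x ^ (ν - 1) * exp (-t) :=
        setIntegral_mono_on (integrableOn_Ioi_rpow_mul_exp_neg hp hx)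
          ((integrableOn_exp_neg_Ioi x).const_mul _) measurableSet_Ioi
          fun t ht => rpow_mul_exp_neg_le_of_le hp hx ht.le
    _ = x ^ (ν - 1) * exp (-x) := by rw [integral_const_mul, integral_exp_neg_Ioi]

lemma one_add_rpow_mul_exp_neg_le_incGamma {ν x : ℝ} (hν : ν ≤ 1) (hx : 0 < x) :
    (1 + x) ^ (ν - 1) * exp (-x) ≤ incGamma ν x := by
  have hp : ν - 1 ≤ 0 := by linarith
  refine le_setIntegral_Ioi_of_hasDerivAt_of_neg_deriv_le
    (fun t ht => hasDerivAt_one_add_rpow_mul_exp_neg _ (by linarith [ht.out]))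
    (fun t ht => ?_) (tendsto_one_add_rpow_mul_exp_neg_atTop hp) (fun t ht => ?_)
    (integrableOn_Ioi_rpow_mul_exp_neg hp hx)
  · have h1t : 0 < 1 + t := by linarith [ht.out]
    have := mul_nonpos_of_nonpos_of_nonneg hp (rpow_pos_of_pos h1t (ν - 1 - 1)).le
    have := rpow_pos_of_pos h1t (ν - 1)
    exact mul_nonpos_of_nonpos_of_nonneg (by linarith) (exp_pos _).le
  · rw [← neg_mul, neg_sub]
    gcongr
    exact one_add_rpow_sub_mul_le_rpow hp (hx.trans ht)

theorem incGamma_bounds (ν x : ℝ) (hν : ν ≤ 1) (hx : 0 < x) :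
    (1 + x) ^ (ν - 1) * Real.exp (-x) ≤ incGamma ν x ∧
    incGamma ν x ≤ x ^ (ν - 1) * Real.exp (-x) :=
  ⟨one_add_rpow_mul_exp_neg_le_incGamma hν hx, incGamma_le_rpow_mul_exp_neg hν hx⟩
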